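/- arXiv:2404.18289 — 6 statements merged into one kernel-verified Lean document; each statement's English description precedes it below -/
import Mathlib

section
/- Let w be a real number and d_1 ≤ ... ≤ d_r positive integers, with α_i = i + (w - d_1 - ... - d_i)/d_i. If i ≤ r-1 and d_i < d_{i+1}, then α_i ≥ α_{i+1} if and only if d_1 + ... + d_i ≤ w. -/
open Finset

theorem Fin.covBy_mk_add_one {r : ℕ} (i : Fin r) (h : (i : ℕ) + 1 < r) :
    i ⋖ (⟨(i : ℕ) + 1, h⟩ : Fin r) :=
  ⟨Fin.lt_def.mpr (Nat.lt_succ_self _), fun c hic hci => by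
    rw [Fin.lt_def] at hic hci
    exact Nat.lt_irrefl _ (lt_of_lt_of_le hci hic)⟩

theorem Finset.sum_Iic_of_covBy {α M : Type*} [LinearOrder α] [LocallyFiniteOrderBot α]
    [AddCommMonoid M] {a b : α} (hab : a ⋖ b) (f : α → M) :
    ∑ j ∈ Iic b, f j = f b + ∑ j ∈ Iic a, f j := by
  have hIio : Iio b = Iic a := coe_injective (by simpa using hab.Iio_eq)
  rw [Iic_eq_cons_Iio, sum_cons, hIio]

theorem div_le_div_left_iff_nonneg_of_lt {K : Type*} [Field K] [LinearOrder K]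
    [IsStrictOrderedRing K] {a b x : K} (ha : 0 < a) (hab : a < b) :
    x / b ≤ x / a ↔ 0 ≤ x := by
  rw [div_le_div_iff₀ (ha.trans hab) ha]
  refine ⟨fun hx => ?_, fun hx => mul_le_mul_of_nonneg_left hab.le hx⟩
  by_contra! hneg
  exact (mul_lt_mul_of_neg_left hab hneg).not_ge hx

theorem stmt_1_general (r : ℕ) (w : ℝ) (d : Fin r → ℕ) (hd : ∀ i, 0 < d i)
    (α : Fin r → ℝ)
    (hα : ∀ i : Fin r, α i = ((i : ℕ) + 1 : ℝ) + (w - ∑ j ∈ Iic i, (d j : ℝ)) / (d i : ℝ))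
    (i : Fin r) (h : (i : ℕ) + 1 < r)
    (hlt : d i < d ⟨(i : ℕ) + 1, h⟩) :
    α i ≥ α ⟨(i : ℕ) + 1, h⟩ ↔ (∑ j ∈ Iic i, (d j : ℝ)) ≤ w := by
  set S := ∑ j ∈ Iic i, (d j : ℝ)
  have hd_succ : (0 : ℝ) < d ⟨(i : ℕ) + 1, h⟩ := by exact_mod_cast hd _
  -- the new summand d_{i+1} cancels against the unit step of the index
  have hα_succ : α ⟨(i : ℕ) + 1, h⟩ = ((i : ℕ) + 1 : ℝ) + (w - S) / d ⟨(i : ℕ) + 1, h⟩ := by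
    rw [hα, sum_Iic_of_covBy (Fin.covBy_mk_add_one i h)]
    field_simp
    push_cast
    ring
  rw [ge_iff_le, hα_succ, hα i, add_le_add_iff_left,
    div_le_div_left_iff_nonneg_of_lt (by exact_mod_cast hd i) (by exact_mod_cast hlt), sub_nonneg]

/-- if `d i < d (i+1)` then `α i ≥ α (i+1)` iff `d 1 + ... + d i ≤ w`. -/
theorem stmt_1 (r : ℕ) (w : ℝ) (d : Fin r → ℕ) (hd : ∀ i, 0 < d i) (hmono : Monotone d)
    (α : Fin r → ℝ)
    (hα : ∀ i : Fin r, α i = ((i : ℕ) + 1 : ℝ) + (w - ∑ j ∈ Iic i, (d j : ℝ)) / (d i : ℝ))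
    (i : Fin r) (h : (i : ℕ) + 1 < r)
    (hlt : d i < d ⟨(i : ℕ) + 1, h⟩) :
    α i ≥ α ⟨(i : ℕ) + 1, h⟩ ↔ (∑ j ∈ Iic i, (d j : ℝ)) ≤ w :=
  stmt_1_general r w d hd α hα i h hlt
end

section
/- Let w be a real number and d_1 ≤ ... ≤ d_r positive integers, with α_i = i + (w - d_1 - ... - d_i)/d_i. Let p be the smallest index i ≤ r with d_1 + ... + d_i > w, with p = r if no such index exists. Then min_{1 ≤ i ≤ r} α_i = α_p. -/
open Finset

/-- the minimum of the `α i` is attained at the least index `p` with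
`d 1 + ... + d p > w` (with `p` the last index if there is no such index). -/
theorem stmt_3 (r : ℕ) (w : ℝ) (d : Fin r → ℕ) (hd : ∀ i, 0 < d i) (hmono : Monotone d)
    (α : Fin r → ℝ)
    (hα : ∀ i : Fin r, α i = ((i : ℕ) + 1 : ℝ) + (w - ∑ j ∈ Iic i, (d j : ℝ)) / (d i : ℝ))
    (p : Fin r)
    (hp1 : ∀ i < p, (∑ j ∈ Iic i, (d j : ℝ)) ≤ w)
    (hp2 : (∑ j ∈ Iic p, (d j : ℝ)) > w ∨ (p : ℕ) + 1 = r) :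
    ∀ i : Fin r, α p ≤ α i := by
  have hdpos : ∀ j : Fin r, (0:ℝ) < d j := fun j => by exact_mod_cast hd j
  have hstep : ∀ (k : ℕ) (h : k + 1 < r),
      α ⟨k+1, h⟩ = α ⟨k, Nat.lt_of_succ_lt h⟩ +
        (w - ∑ j ∈ Iic (⟨k, Nat.lt_of_succ_lt h⟩ : Fin r), (d j : ℝ)) *
          (1/(d ⟨k+1, h⟩ : ℝ) - 1/(d ⟨k, Nat.lt_of_succ_lt h⟩ : ℝ)) := by
    intro k h
    have hk : k < r := Nat.lt_of_succ_lt h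
    have hnot : (⟨k+1, h⟩ : Fin r) ∉ Iic (⟨k, hk⟩ : Fin r) := by
      simp [Fin.le_def]
    have hins : (Iic (⟨k+1, h⟩ : Fin r)) = insert ⟨k+1, h⟩ (Iic ⟨k, hk⟩) := by
      ext x
      simp [Fin.le_def, Fin.ext_iff]
      omega
    have hSsucc : (∑ j ∈ Iic (⟨k+1, h⟩ : Fin r), (d j : ℝ))
        = (∑ j ∈ Iic (⟨k, hk⟩ : Fin r), (d j : ℝ)) + d ⟨k+1, h⟩ := by
      rw [hins, Finset.sum_insert hnot]; ring
    have h1 : (d ⟨k+1, h⟩ : ℝ) ≠ 0 := (hdpos _).ne'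
    have h2 : (d ⟨k, hk⟩ : ℝ) ≠ 0 := (hdpos _).ne'
    rw [hα, hα, hSsucc]
    push_cast
    field_simp
    ring
  intro i
  rcases le_total i p with hip | hpi
  · -- i ≤ p : α antitone on [i, p]
    have key : ∀ n : ℕ, ∀ i : Fin r, (i : ℕ) + n = (p : ℕ) → α p ≤ α i := by
      intro n
      induction n with
      | zero =>
          intro i hi
          have : i = p := Fin.ext (by omega)
          rw [this]
      | succ n ih =>
          intro i hi
          have hlt : (i : ℕ) < (p : ℕ) := by omega
          have h : (i : ℕ) + 1 < r := lt_of_le_of_lt (by omega) p.isLt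
          have hi' : ((⟨(i : ℕ) + 1, h⟩ : Fin r) : ℕ) + n = (p : ℕ) := by simp; omega
          have h1 := ih ⟨(i : ℕ) + 1, h⟩ hi'
          have h2 := hstep (i : ℕ) h
          have hieq : (⟨(i : ℕ), Nat.lt_of_succ_lt h⟩ : Fin r) = i := Fin.ext rfl
          rw [hieq] at h2
          have hw : (∑ j ∈ Iic i, (d j : ℝ)) ≤ w := hp1 i (by rwa [Fin.lt_def])
          have hdle : (d i : ℝ) ≤ (d ⟨(i : ℕ) + 1, h⟩ : ℝ) := by
            exact_mod_cast hmono (show i ≤ ⟨(i : ℕ) + 1, h⟩ by simp [Fin.le_def])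
          have hinv : 1/(d ⟨(i : ℕ) + 1, h⟩ : ℝ) - 1/(d i : ℝ) ≤ 0 := by
            have := one_div_le_one_div_of_le (hdpos i) hdle
            linarith
          have hprod : (w - ∑ j ∈ Iic i, (d j : ℝ)) *
              (1/(d ⟨(i : ℕ) + 1, h⟩ : ℝ) - 1/(d i : ℝ)) ≤ 0 :=
            mul_nonpos_of_nonneg_of_nonpos (by linarith) hinv
          linarith
    exact key ((p : ℕ) - (i : ℕ)) i (by have := Fin.le_def.mp hip; omega)
  · -- p ≤ i : α monotone on [p, i]
    have key : ∀ n : ℕ, ∀ i : Fin r, (p : ℕ) + n = (i : ℕ) → α p ≤ α i := by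
      intro n
      induction n with
      | zero =>
          intro i hi
          have : i = p := Fin.ext (by omega)
          rw [this]
      | succ n ih =>
          intro i hi
          have hSgt : (∑ j ∈ Iic p, (d j : ℝ)) > w := by
            rcases hp2 with h | h
            · exact h
            · exact absurd i.isLt (by omega)
          have hk : (p : ℕ) + n < r := by have := i.isLt; omega
          have h : (p : ℕ) + n + 1 < r := by have := i.isLt; omega
          have hieq : (⟨(p : ℕ) + n + 1, h⟩ : Fin r) = i := Fin.ext (by show (p:ℕ)+n+1 = (i:ℕ); omega)
          have h1 := ih ⟨(p : ℕ) + n, hk⟩ (by simp)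
          have h2 := hstep ((p : ℕ) + n) h
          rw [hieq] at h2
          have hple : p ≤ (⟨(p : ℕ) + n, hk⟩ : Fin r) := by simp [Fin.le_def]
          have hSmono : (∑ j ∈ Iic p, (d j : ℝ)) ≤
              ∑ j ∈ Iic (⟨(p : ℕ) + n, hk⟩ : Fin r), (d j : ℝ) := by
            apply Finset.sum_le_sum_of_subset_of_nonneg (Iic_subset_Iic.mpr hple)
            intro j _ _
            positivity
          have hdle : (d (⟨(p : ℕ) + n, hk⟩ : Fin r) : ℝ) ≤ (d i : ℝ) := by
            exact_mod_cast hmono (show (⟨(p : ℕ) + n, hk⟩ : Fin r) ≤ i by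
              rw [Fin.le_def]; simp only [Fin.val_mk]; omega)
          have hinv : 1/(d i : ℝ) - 1/(d (⟨(p : ℕ) + n, hk⟩ : Fin r) : ℝ) ≤ 0 := by
            have := one_div_le_one_div_of_le (hdpos _) hdle
            linarith
          have hprod : (w - ∑ j ∈ Iic (⟨(p : ℕ) + n, hk⟩ : Fin r), (d j : ℝ)) *
              (1/(d i : ℝ) - 1/(d (⟨(p : ℕ) + n, hk⟩ : Fin r) : ℝ)) ≥ 0 := by
            nlinarith
          linarith
    exact key ((i : ℕ) - (p : ℕ)) i (by have := Fin.le_def.mp hpi; omega)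
end

section
/- Let n ≥ 1 and let 2 ≤ d_1 ≤ ... ≤ d_r be integers with d_1 + ... + d_r ≤ n. Set α_i = i + (n - d_1 - ... - d_i)/d_i. Then min_i α_i = α_r, i.e., α_r ≤ α_i for all 1 ≤ i ≤ r. -/
open Finset

/-- if `d 1 + ... + d r ≤ n` then `min_i α i = α r`. -/
theorem stmt_4 (n r : ℕ) (hn : 0 < n) (hr : 0 < r)
    (d : Fin r → ℕ) (hd : ∀ i, 2 ≤ d i) (hmono : Monotone d)
    (hsum : ∑ i, d i ≤ n)
    (α : Fin r → ℚ)
    (hα : ∀ i : Fin r, α i = ((i : ℕ) + 1 : ℚ) + ((n : ℚ) - ∑ j ∈ Iic i, (d j : ℚ)) / (d i : ℚ)) :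
    ∀ i : Fin r, α ⟨r - 1, by omega⟩ ≤ α i := by
  -- step lemma
  have step : ∀ m : ℕ, ∀ hm : m + 1 < r, α ⟨m + 1, hm⟩ ≤ α ⟨m, by omega⟩ := by
    intro m hm
    set i : Fin r := ⟨m, by omega⟩ with hi_def
    set i' : Fin r := ⟨m + 1, hm⟩ with hi'_def
    have hIic : Iic i' = insert i' (Iic i) := by
      ext x
      simp only [mem_Iic, mem_insert, Fin.le_def, hi_def, hi'_def, Fin.ext_iff]
      omega
    have hnotmem : i' ∉ Iic i := by
      simp [mem_Iic, Fin.le_def, hi_def, hi'_def]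
    have hsumQ : ∑ j ∈ Iic i', (d j : ℚ) = (d i' : ℚ) + ∑ j ∈ Iic i, (d j : ℚ) := by
      rw [hIic, sum_insert hnotmem]
    -- partial sum bound in ℕ
    have hpart : ∑ j ∈ Iic i', d j ≤ n :=
      le_trans (sum_le_sum_of_subset (subset_univ _)) hsum
    have hpartQ : (d i' : ℚ) + ∑ j ∈ Iic i, (d j : ℚ) ≤ (n : ℚ) := by
      rw [← hsumQ]
      exact_mod_cast hpart
    have ha : (0 : ℚ) < (d i : ℚ) := by exact_mod_cast lt_of_lt_of_le (by norm_num) (hd i)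
    have hb : (0 : ℚ) < (d i' : ℚ) := by exact_mod_cast lt_of_lt_of_le (by norm_num) (hd i')
    have hab : (d i : ℚ) ≤ (d i' : ℚ) := by
      exact_mod_cast hmono (by simp [Fin.le_def, hi_def, hi'_def])
    rw [hα i, hα i']
    rw [hsumQ]
    set a : ℚ := (d i : ℚ)
    set b : ℚ := (d i' : ℚ)
    set S : ℚ := ∑ j ∈ Iic i, (d j : ℚ)
    have hns : (0 : ℚ) ≤ n - S - b := by linarith
    have h1 : (n - (b + S)) / b ≤ (n - (b + S)) / a :=
      div_le_div_of_nonneg_left (by linarith) ha hab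
    have h2 : (1 : ℚ) ≤ b / a := (one_le_div ha).mpr hab
    have h3 : ((n : ℚ) - S) / a = (n - (b + S)) / a + b / a := by ring
    have hcast : ((i' : ℕ) : ℚ) = (m : ℚ) + 1 := by simp [hi'_def]
    have hcast' : ((i : ℕ) : ℚ) = (m : ℚ) := by simp [hi_def]
    rw [hcast, hcast']
    linarith
  -- downward induction
  have key : ∀ m : ℕ, ∀ hm : m < r, ∀ k : ℕ, ∀ hk : k ≤ m, α ⟨m, hm⟩ ≤ α ⟨k, by omega⟩ := by
    intro m
    induction m with
    | zero => intro hm k hk; interval_cases k; exact le_refl _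
    | succ p ih =>
      intro hm k hk
      rcases Nat.lt_or_ge k (p + 1) with h | h
      · exact le_trans (step p hm) (ih (by omega) k (by omega))
      · have : k = p + 1 := by omega
        subst this; exact le_refl _
  intro i
  have := key (r - 1) (by omega) i.1 (by omega)
  simpa using this
end

section
/- Let n ≥ 1, let d_1 ≤ ... ≤ d_r be integers ≥ 2, and let u_1, ..., u_r be nonnegative reals. Fix indices k < k' ≤ r and suppose u_j ≥ u_{k'} + (d_{k'} - d_j) for all k < j ≤ k'. Define β_k = (n + k·u_k + ∑_{j=1}^{k}(d_k - d_j) + ∑_{j>k} u_j)/(d_k + u_k), α_k = k + (n - ∑_{j=1}^k d_j)/d_k, and similarly β_{k'}. If 0 ≤ u_k ≤ u_{k'} + (d_{k'} - d_k), then β_k ≥ min(α_k, β_{k'}). -/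
/-! Write `β m = (m + 1) + slack m / (d m + u m)` with
`slack m = n - ∑_{j ≤ m} d j + ∑_{j > m} u j`. If `slack k ≤ 0`, then `n - ∑_{j ≤ k} d j ≤ 0`,
so passing from `α k` to `β k` (adding `∑_{j > k} u j ≥ 0` to the numerator and `u k ≥ 0` to the
denominator) does not decrease the fraction. If `slack k > 0`, then `d k + u k ≤ d k' + u k'` and
`slack k - slack k' = ∑_{k < j ≤ k'} (d j + u j) ≥ (k' - k) (d k' + u k')`, which gives
`β k' ≤ β k`. -/

open Finset

theorem Finset.sum_Ioc_add_sum_Ioi {ι M : Type*} [LinearOrder ι] [LocallyFiniteOrder ι]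
    [LocallyFiniteOrderTop ι] [AddCommMonoid M] {a b : ι} (hab : a ≤ b) (f : ι → M) :
    ∑ j ∈ Ioc a b, f j + ∑ j ∈ Ioi b, f j = ∑ j ∈ Ioi a, f j := by
  rw [← sum_union (disjoint_left.2 fun j hj hj' => by grind)]
  congr 1
  ext j
  simp only [mem_union, mem_Ioc, mem_Ioi]
  grind

theorem Fin.sum_Iic_const_sub {R : Type*} [CommRing R] {r : ℕ} (f : Fin r → R) (m : Fin r) :
    ∑ j ∈ Iic m, (f m - f j) = ((m : ℕ) + 1) * f m - ∑ j ∈ Iic m, f j := by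
  rw [sum_sub_distrib, Finset.sum_const, Fin.card_Iic, nsmul_eq_mul]
  push_cast
  ring

theorem Fin.mul_le_sum_Ioc {R : Type*} [Ring R] [PartialOrder R] [IsOrderedRing R] {r : ℕ}
    {k k' : Fin r} (hkk' : k ≤ k') {f : Fin r → R} {c : R}
    (hf : ∀ j, k < j → j ≤ k' → c ≤ f j) : ((k' : R) - k) * c ≤ ∑ j ∈ Ioc k k', f j := by
  have h := card_nsmul_le_sum (Ioc k k') f c fun j hj => hf j (mem_Ioc.1 hj).1 (mem_Ioc.1 hj).2
  rwa [Fin.card_Ioc, nsmul_eq_mul, Nat.cast_sub (Fin.le_def.1 hkk')] at h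

section OrderedField

variable {𝕜 : Type*} [Field 𝕜] [LinearOrder 𝕜] [IsStrictOrderedRing 𝕜]

theorem div_le_add_div_add {x t a b : 𝕜} (hxt : x + t ≤ 0) (ht : 0 ≤ t) (hb : 0 ≤ b) (ha : 0 < a) :
    x / a ≤ (x + t) / (a + b) := by
  rw [div_le_div_iff₀ ha (by positivity)]
  nlinarith

theorem add_div_le_add_div {K K' C C' E E' : 𝕜} (hC : 0 ≤ C) (hE : 0 < E) (hEE' : E ≤ E')
    (hgap : (K' - K) * E' ≤ C - C') : K' + C' / E' ≤ K + C / E := by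
  have hE' : 0 < E' := hE.trans_le hEE'
  have : K' - K + C' / E' ≤ C / E' := by
    rw [← sub_nonneg]; field_simp; linarith
  linarith [div_le_div_of_nonneg_left hC hE hEE']

end OrderedField

noncomputable def slack {r : ℕ} (N : ℝ) (d u : Fin r → ℝ) (m : Fin r) : ℝ :=
  N - ∑ j ∈ Iic m, d j + ∑ j ∈ Ioi m, u j

theorem div_eq_add_slack_div {r : ℕ} (N : ℝ) (d u : Fin r → ℝ) (m : Fin r) (hm : d m + u m ≠ 0) :
    (N + ((m : ℕ) + 1 : ℝ) * u m + ∑ j ∈ Iic m, (d m - d j) + ∑ j ∈ Ioi m, u j) / (d m + u m) =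
      ((m : ℕ) + 1 : ℝ) + slack N d u m / (d m + u m) := by
  rw [Fin.sum_Iic_const_sub, slack]
  field_simp
  ring

theorem slack_sub_slack {r : ℕ} (N : ℝ) (d u : Fin r → ℝ) {k k' : Fin r} (hkk' : k ≤ k') :
    slack N d u k - slack N d u k' = ∑ j ∈ Ioc k k', (d j + u j) := by
  rw [slack, slack, ← Iic_union_Ioc_eq_Iic hkk', sum_union (Iic_disjoint_Ioc le_rfl),
    ← Finset.sum_Ioc_add_sum_Ioi hkk', sum_add_distrib]
  ring

theorem stmt_9_general (n r : ℕ)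
    (d : Fin r → ℕ) (hd : ∀ i, 2 ≤ d i)
    (u : Fin r → ℝ) (hu : ∀ j, 0 ≤ u j)
    (β α : Fin r → ℝ)
    (hβ : ∀ m : Fin r, β m = ((n : ℝ) + ((m : ℕ) + 1 : ℝ) * u m +
        (∑ j ∈ Iic m, ((d m : ℝ) - (d j : ℝ))) + ∑ j ∈ Ioi m, u j) / ((d m : ℝ) + u m))
    (hα : ∀ m : Fin r, α m = ((m : ℕ) + 1 : ℝ) + ((n : ℝ) - ∑ j ∈ Iic m, (d j : ℝ)) / (d m : ℝ))
    (k k' : Fin r) (hkk' : k < k')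
    (hbetween : ∀ j : Fin r, k < j → j ≤ k' → u j ≥ u k' + ((d k' : ℝ) - (d j : ℝ)))
    (huk : u k ≤ u k' + ((d k' : ℝ) - (d k : ℝ))) :
    β k ≥ min (α k) (β k') := by
  have hd_pos (j : Fin r) : (0 : ℝ) < d j := by exact_mod_cast (two_pos.trans_le (hd j))
  have hE (j : Fin r) : (d j : ℝ) + u j ≠ 0 := (add_pos_of_pos_of_nonneg (hd_pos j) (hu j)).ne'
  rw [ge_iff_le, hβ k, hβ k', hα k, div_eq_add_slack_div _ (fun j => (d j : ℝ)) u k (hE k),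
    div_eq_add_slack_div _ (fun j => (d j : ℝ)) u k' (hE k')]
  rcases le_or_gt (slack n (fun j => (d j : ℝ)) u k) 0 with hC | hC
  · exact min_le_of_left_le ((add_le_add_iff_left _).2
      (div_le_add_div_add hC (sum_nonneg fun j _ => hu j) (hu k) (hd_pos k)))
  · refine min_le_of_right_le (add_div_le_add_div hC.le
      (add_pos_of_pos_of_nonneg (hd_pos k) (hu k)) (by linarith) ?_)
    rw [add_sub_add_right_eq_sub, slack_sub_slack _ _ _ hkk'.le]
    exact Fin.mul_le_sum_Ioc hkk'.le fun j hkj hjk' => by linarith [hbetween j hkj hjk']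

/-- inequality (ineq5): if `u j ≥ u k' + (d k' - d j)` for `k < j ≤ k'`
and `0 ≤ u k ≤ u k' + (d k' - d k)`, then `β k ≥ min (α k) (β k')`. -/
theorem stmt_9 (n r : ℕ) (hn : 0 < n)
    (d : Fin r → ℕ) (hd : ∀ i, 2 ≤ d i) (hmono : Monotone d)
    (u : Fin r → ℝ) (hu : ∀ j, 0 ≤ u j)
    (β α : Fin r → ℝ)
    (hβ : ∀ m : Fin r, β m = ((n : ℝ) + ((m : ℕ) + 1 : ℝ) * u m +
        (∑ j ∈ Iic m, ((d m : ℝ) - (d j : ℝ))) + ∑ j ∈ Ioi m, u j) / ((d m : ℝ) + u m))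
    (hα : ∀ m : Fin r, α m = ((m : ℕ) + 1 : ℝ) + ((n : ℝ) - ∑ j ∈ Iic m, (d j : ℝ)) / (d m : ℝ))
    (k k' : Fin r) (hkk' : k < k')
    (hbetween : ∀ j : Fin r, k < j → j ≤ k' → u j ≥ u k' + ((d k' : ℝ) - (d j : ℝ)))
    (huk : u k ≤ u k' + ((d k' : ℝ) - (d k : ℝ))) :
    β k ≥ min (α k) (β k') :=
  stmt_9_general n r d hd u hu β α hβ hα k k' hkk' hbetween huk
end

section
/- Let n, r ≥ 1 with 2 ≤ d_1 ≤ ... ≤ d_r and d_1 + ... + d_r > n. Set α_p = p + (n - d_1 - ... - d_p)/d_p where p is the least i with d_1 + ... + d_i > n. Then for all real b_0 > 0 and b_1, ..., b_r ≥ 0, we have n·b_0 + ∑_{j=1}^r b_j ≥ α_p · min_{1 ≤ j ≤ r}(b_0 d_j + b_j). -/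
open Finset

/-- inequality (ineq1): if `∑ d j > n`, then for all `b0 > 0` and `b j ≥ 0`,
`n b0 + ∑ b j ≥ α_p ⬝ min_j (b0 d j + b j)`, where `p` is the least index with
`d 1 + ... + d p > n`. -/
theorem stmt_11 (n r : ℕ) (hn : 0 < n) (hr : 0 < r)
    (d : Fin r → ℕ) (hd : ∀ i, 2 ≤ d i) (hmono : Monotone d)
    (hsum : ∑ i, d i > n)
    (p : Fin r)
    (hp1 : ∀ i < p, (∑ j ∈ Iic i, d j) ≤ n)
    (hp2 : (∑ j ∈ Iic p, d j) > n)
    (αp : ℝ)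
    (hαp : αp = ((p : ℕ) + 1 : ℝ) + ((n : ℝ) - ∑ j ∈ Iic p, (d j : ℝ)) / (d p : ℝ))
    (b0 : ℝ) (hb0 : 0 < b0) (b : Fin r → ℝ) (hb : ∀ j, 0 ≤ b j) :
    (n : ℝ) * b0 + ∑ j, b j ≥
      αp * Finset.univ.inf'
        (Finset.univ_nonempty_iff.mpr ⟨⟨0, hr⟩⟩) (fun j : Fin r => b0 * (d j : ℝ) + b j) := by
  set m := Finset.univ.inf'
        (Finset.univ_nonempty_iff.mpr ⟨⟨0, hr⟩⟩) (fun j : Fin r => b0 * (d j : ℝ) + b j) with hm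
  have hm_le : ∀ j, m ≤ b0 * (d j : ℝ) + b j := fun j => Finset.inf'_le _ (mem_univ j)
  have hdcast : ∀ j, (2:ℝ) ≤ (d j : ℝ) := fun j => by exact_mod_cast hd j
  have hm_pos : 0 < m := by
    rw [hm, Finset.lt_inf'_iff]
    intro j _
    nlinarith [hdcast j, hb j]
  have hdp0 : (0:ℝ) < (d p : ℝ) := lt_of_lt_of_le two_pos (hdcast p)
  -- sum over Iio p is ≤ n
  have hIio_le : ∑ j ∈ Iio p, d j ≤ n := by
    rcases Nat.eq_zero_or_pos p.val with h | h
    · have : Iio p = ∅ := by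
        ext j; simp [Fin.lt_def, h]
      simp [this]
    · have hlt : p.val - 1 < r := lt_of_le_of_lt (Nat.pred_le _) p.isLt
      set i : Fin r := ⟨p.val - 1, hlt⟩ with hi
      have hip : i < p := by
        simp only [Fin.lt_def, hi]
        omega
      have heq : Iio p = Iic i := by
        ext j
        simp only [Finset.mem_Iio, Finset.mem_Iic, Fin.lt_def, Fin.le_def, hi]
        omega
      rw [heq]
      exact hp1 i hip
  -- split Iic sum
  have hsplit : (∑ j ∈ Iic p, (d j : ℝ)) = (∑ j ∈ Iio p, (d j : ℝ)) + (d p : ℝ) := by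
    rw [show Iic p = insert p (Iio p) from (Finset.Iio_insert p).symm,
      Finset.sum_insert (by simp)]
    ring
  set S : ℝ := ∑ j ∈ Iic p, (d j : ℝ) with hS
  set t : ℝ := 1 + ((n : ℝ) - S) / (d p : ℝ) with ht
  have hSn : (n : ℝ) < S := by
    rw [hS]
    push_cast
    exact_mod_cast hp2
  have hIio_cast : (∑ j ∈ Iio p, (d j : ℝ)) ≤ (n : ℝ) := by
    have : ((∑ j ∈ Iio p, d j : ℕ) : ℝ) ≤ (n : ℝ) := by exact_mod_cast hIio_le
    simpa using this
  have ht_nonneg : 0 ≤ t := by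
    rw [ht]
    have h1 : (S - (n : ℝ)) / (d p : ℝ) ≤ 1 := by
      rw [div_le_one hdp0]
      linarith [hsplit, hIio_cast]
    have h2 : -(((n : ℝ) - S) / (d p : ℝ)) = (S - (n : ℝ)) / (d p : ℝ) := by ring
    linarith
  have ht_le : t ≤ 1 := by
    rw [ht]
    have : ((n : ℝ) - S) / (d p : ℝ) ≤ 0 :=
      div_nonpos_of_nonpos_of_nonneg (by linarith) (le_of_lt hdp0)
    linarith
  have hcard : (Iio p).card = p.val := by simp
  have key1 : (p.val : ℝ) * m ≤ ∑ j ∈ Iio p, (b0 * (d j : ℝ) + b j) := by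
    calc (p.val : ℝ) * m = ∑ _j ∈ Iio p, m := by
          rw [Finset.sum_const, hcard, nsmul_eq_mul]
      _ ≤ ∑ j ∈ Iio p, (b0 * (d j : ℝ) + b j) :=
          Finset.sum_le_sum (fun j _ => hm_le j)
  have key2 : t * m ≤ t * (b0 * (d p : ℝ) + b p) :=
    mul_le_mul_of_nonneg_left (hm_le p) ht_nonneg
  have hd_id : (∑ j ∈ Iio p, (d j : ℝ)) + t * (d p : ℝ) = (n : ℝ) := by
    rw [ht]
    field_simp
    linarith [hsplit]
  have hb_bound : (∑ j ∈ Iio p, b j) + t * b p ≤ ∑ j, b j := by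
    have h1 : (∑ j ∈ Iio p, b j) + t * b p ≤ ∑ j ∈ Iic p, b j := by
      rw [show Iic p = insert p (Iio p) from (Finset.Iio_insert p).symm,
        Finset.sum_insert (by simp)]
      nlinarith [hb p]
    have h2 : ∑ j ∈ Iic p, b j ≤ ∑ j, b j :=
      Finset.sum_le_sum_of_subset_of_nonneg (Finset.subset_univ _)
        (fun j _ _ => hb j)
    linarith
  have hαpm : αp * m = (p.val : ℝ) * m + t * m := by
    rw [hαp, ht]; ring
  calc αp * m = (p.val : ℝ) * m + t * m := hαpm
    _ ≤ (∑ j ∈ Iio p, (b0 * (d j : ℝ) + b j)) + t * (b0 * (d p : ℝ) + b p) := by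
        linarith
    _ = b0 * ((∑ j ∈ Iio p, (d j : ℝ)) + t * (d p : ℝ))
        + ((∑ j ∈ Iio p, b j) + t * b p) := by
        rw [Finset.sum_add_distrib, ← Finset.mul_sum]; ring
    _ = b0 * (n : ℝ) + ((∑ j ∈ Iio p, b j) + t * b p) := by rw [hd_id]
    _ ≤ (n : ℝ) * b0 + ∑ j, b j := by linarith
end

section
/- Let n, r ≥ 1 with 2 ≤ d_1 ≤ ... ≤ d_r, d_1 + ... + d_r > n, and let p and α_p be as above. Then for all nonnegative reals u_1, ..., u_r, n + ∑_{j=1}^r u_j ≥ α_p · min_{1 ≤ j ≤ r}(d_j + u_j). -/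
open Finset

/-! Write `αₚ = p + β` with `β = (n - ∑_{j<p} d_j) / d_p`; the choice of `p` gives `0 ≤ β < 1`.
With `m = min_j (d_j + u_j)`, bound `p·m` by `∑_{j<p} (d_j + u_j)` and `β·m` by
`β (d_p + u_p) ≤ β d_p + u_p`; since `∑_{j<p} d_j + β d_p = n`, the sum is at most `n + ∑_{j≤p} u_j`. -/

theorem sum_Iio_le_of_forall_lt_sum_Iic_le {α M : Type*} [LinearOrder α] [LocallyFiniteOrderBot α]
    [AddCommMonoid M] [PartialOrder M] [CanonicallyOrderedAdd M] {d : α → M} {n : M} {p : α}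
    (h : ∀ i < p, ∑ j ∈ Iic i, d j ≤ n) : ∑ j ∈ Iio p, d j ≤ n := by
  rcases (Iio p).eq_empty_or_nonempty with hempty | hne
  · simp [hempty]
  · have hmax : (Iio p).max' hne < p := mem_Iio.mp ((Iio p).max'_mem hne)
    have hIio : Iio p = Iic ((Iio p).max' hne) := by
      ext j
      simp only [mem_Iio, mem_Iic]
      exact ⟨fun hj => (Iio p).le_max' j (mem_Iio.mpr hj), fun hj => hj.trans_lt hmax⟩
    rw [hIio]
    exact h _ hmax

theorem card_add_mul_le_add_sum {ι : Type*} {s : Finset ι} {k : ι} (hk : k ∉ s)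
    {d u : ι → ℝ} {m β : ℝ} (hm : ∀ j ∈ s.cons k hk, m ≤ d j + u j) (hu : 0 ≤ u k)
    (hβ0 : 0 ≤ β) (hβ1 : β ≤ 1) :
    (#s + β) * m ≤ ∑ j ∈ s, d j + β * d k + ∑ j ∈ s.cons k hk, u j := by
  have hs : (#s : ℝ) * m ≤ ∑ j ∈ s, (d j + u j) := by
    rw [← nsmul_eq_mul, ← sum_const]
    exact sum_le_sum fun j hj => hm j (mem_cons_of_mem hj)
  have hmk : β * m ≤ β * (d k + u k) :=
    mul_le_mul_of_nonneg_left (hm k (mem_cons_self k s)) hβ0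
  have huk : β * u k ≤ u k := mul_le_of_le_one_left hu hβ1
  rw [sum_add_distrib] at hs
  rw [sum_cons]
  linarith

theorem card_add_div_mul_le_add_sum {ι : Type*} {s : Finset ι} {k : ι} (hk : k ∉ s)
    {d u : ι → ℝ} {m N : ℝ} (hle : ∑ j ∈ s, d j ≤ N) (hlt : N < ∑ j ∈ s.cons k hk, d j)
    (hm : ∀ j ∈ s.cons k hk, m ≤ d j + u j) (hu : 0 ≤ u k) :
    (#s + (N - ∑ j ∈ s, d j) / d k) * m ≤ N + ∑ j ∈ s.cons k hk, u j := by
  rw [sum_cons] at hlt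
  have hdk : 0 < d k := by linarith
  have hβ0 : 0 ≤ (N - ∑ j ∈ s, d j) / d k := div_nonneg (by linarith) hdk.le
  have hβ1 : (N - ∑ j ∈ s, d j) / d k ≤ 1 := (div_le_one hdk).mpr (by linarith)
  have hβd : (N - ∑ j ∈ s, d j) / d k * d k = N - ∑ j ∈ s, d j := div_mul_cancel₀ _ hdk.ne'
  have := card_add_mul_le_add_sum hk hm hu hβ0 hβ1
  linarith

theorem stmt_12_general (n r : ℕ) (hr : 0 < r)
    (d : Fin r → ℕ)
    (p : Fin r)
    (hp1 : ∀ i < p, (∑ j ∈ Iic i, d j) ≤ n)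
    (hp2 : (∑ j ∈ Iic p, d j) > n)
    (αp : ℝ)
    (hαp : αp = ((p : ℕ) + 1 : ℝ) + ((n : ℝ) - ∑ j ∈ Iic p, (d j : ℝ)) / (d p : ℝ))
    (u : Fin r → ℝ) (hu : ∀ j, 0 ≤ u j) :
    (n : ℝ) + ∑ j, u j ≥
      αp * Finset.univ.inf'
        (Finset.univ_nonempty_iff.mpr ⟨⟨0, hr⟩⟩) (fun j : Fin r => (d j : ℝ) + u j) := by
  have hle : ∑ j ∈ Iio p, (d j : ℝ) ≤ n := by
    exact_mod_cast sum_Iio_le_of_forall_lt_sum_Iic_le hp1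
  have hlt : (n : ℝ) < ∑ j ∈ (Iio p).cons p notMem_Iio_self, (d j : ℝ) := by
    rw [← Iic_eq_cons_Iio]
    exact_mod_cast hp2
  have hdp : (d p : ℝ) ≠ 0 := by
    rw [sum_cons] at hlt
    linarith
  have hα : αp = #(Iio p) + ((n : ℝ) - ∑ j ∈ Iio p, (d j : ℝ)) / d p := by
    rw [hαp, Fin.card_Iio, Iic_eq_cons_Iio, sum_cons]
    field_simp
    ring
  have hsub : ∑ j ∈ (Iio p).cons p notMem_Iio_self, u j ≤ ∑ j, u j :=
    sum_le_sum_of_subset_of_nonneg (subset_univ _) fun j _ _ => hu j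
  rw [ge_iff_le, hα]
  refine (card_add_div_mul_le_add_sum _ hle hlt (fun j _ => inf'_le _ (mem_univ j)) (hu p)).trans ?_
  linarith

/-- inequality (ineq2): if `∑ d j > n`, then for all `u j ≥ 0`,
`n + ∑ u j ≥ α_p ⬝ min_j (d j + u j)`. -/
theorem stmt_12 (n r : ℕ) (hn : 0 < n) (hr : 0 < r)
    (d : Fin r → ℕ) (hd : ∀ i, 2 ≤ d i) (hmono : Monotone d)
    (hsum : ∑ i, d i > n)
    (p : Fin r)
    (hp1 : ∀ i < p, (∑ j ∈ Iic i, d j) ≤ n)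
    (hp2 : (∑ j ∈ Iic p, d j) > n)
    (αp : ℝ)
    (hαp : αp = ((p : ℕ) + 1 : ℝ) + ((n : ℝ) - ∑ j ∈ Iic p, (d j : ℝ)) / (d p : ℝ))
    (u : Fin r → ℝ) (hu : ∀ j, 0 ≤ u j) :
    (n : ℝ) + ∑ j, u j ≥
      αp * Finset.univ.inf'
        (Finset.univ_nonempty_iff.mpr ⟨⟨0, hr⟩⟩) (fun j : Fin r => (d j : ℝ) + u j) :=
  stmt_12_general n r hr d p hp1 hp2 αp hαp u hu
end
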